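/- For all x > 0, (18^{1/4}/√(2π))·x^x·e^{−x}·(x² + x/3 + 1/18)^{1/4} < Γ(x+1) < √(2π)·x^x·e^{−x}·(x² + x/3 + 1/18)^{1/4}. -/

import Mathlib

/-!
Write `Q x = x ^ 2 + x / 3 + 1 / 18` and compare `log Γ(x + 1)` with two approximations:
`F x = log Γ(x + 1) - (x log x - x + log (2πx) / 2)` (`stirlingRem`) and
`G x = log Γ(x + 1) - (x log x - x + log (2π) / 2 + log (Q x) / 4)` (`quadRem`).
The series of `log (1 + 1/x)` in `1 / (2x + 1)` gives
`F x - F (x + 1) = (x + 1/2) log (1 + 1/x) - 1 > 0`, and `G x - G (x + 1) = Δ x` with `Δ`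
increasing to `0`: after replacing `log (1 + 1/x)` by four terms of that series, `Δ'` is a
rational function with positive coefficients.
Log-convexity of `Γ` interpolates Stirling's formula for `n!`, so `F (x + n) → 0`; since
`G ≤ F`, this gives `F > 0 > G`. `G < 0` is the upper bound. The lower bound is weaker than
`F (x + 1) > 0`, i.e. `Γ(x + 1) > √(2π) (x + 1) ^ (x + 1/2) e ^ (-x - 1)`, because
`18 ^ (1/4) e < 2π`.
-/

open Real Filter Topology Set

namespace GammaQuarticBound

lemma log_add_one_sub_log {x : ℝ} (hx : 0 < x) : log (x + 1) - log x = log (1 + x⁻¹) := by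
  rw [← log_div (by linarith) hx.ne']
  congr 1
  field_simp

lemma sum_le_log_add_one_sub_log {x : ℝ} (hx : 0 < x) (n : ℕ) :
    ∑ k ∈ Finset.range n, 2 * (1 / (2 * k + 1)) * (1 / (2 * x + 1)) ^ (2 * k + 1)
      ≤ log (x + 1) - log x := by
  rw [log_add_one_sub_log hx]
  exact sum_le_hasSum _ (fun _ _ => by positivity) (hasSum_log_one_add_inv hx)

lemma one_lt_add_half_mul_log_sub_log {x : ℝ} (hx : 0 < x) :
    1 < (x + 1 / 2) * (log (x + 1) - log x) := by
  have h := sum_le_log_add_one_sub_log hx 2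
  set u := 1 / (2 * x + 1) with hu
  have hu0 : 0 < u := by positivity
  have hxu : (x + 1 / 2) * (2 * u + 2 / 3 * u ^ 3) = 1 + u ^ 2 / 3 := by
    rw [hu]; field_simp
  simp only [Finset.sum_range_succ, Finset.sum_range_zero] at h
  norm_num at h
  nlinarith [mul_le_mul_of_nonneg_left h (by linarith : (0 : ℝ) ≤ x + 1 / 2), pow_pos hu0 2]

noncomputable def stirlingApprox (y : ℝ) : ℝ := y * log y - y + log (2 * π * y) / 2

noncomputable def stirlingRem (y : ℝ) : ℝ := log (Gamma (y + 1)) - stirlingApprox y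

lemma log_Gamma_add_one {y : ℝ} (hy : 0 < y) :
    log (Gamma (y + 1)) = log (Gamma y) + log y := by
  rw [Gamma_add_one hy.ne', log_mul hy.ne' (Gamma_pos_of_pos hy).ne', add_comm]

lemma stirlingRem_sub_stirlingRem_add_one {y : ℝ} (hy : 0 < y) :
    stirlingRem y - stirlingRem (y + 1) = (y + 1 / 2) * (log (y + 1) - log y) - 1 := by
  have hy1 : 0 < y + 1 := by linarith
  simp only [stirlingRem, stirlingApprox]
  rw [log_Gamma_add_one hy1, log_mul (by positivity) hy.ne', log_mul (by positivity) hy1.ne']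
  ring

lemma stirlingRem_add_one_lt {y : ℝ} (hy : 0 < y) : stirlingRem (y + 1) < stirlingRem y := by
  linarith [stirlingRem_sub_stirlingRem_add_one hy, one_lt_add_half_mul_log_sub_log hy]

lemma stirlingRem_natCast {n : ℕ} (hn : n ≠ 0) :
    stirlingRem n = log (Stirling.stirlingSeq n) - log π / 2 := by
  have hn0 : (0 : ℝ) < n := by positivity
  rw [stirlingRem, stirlingApprox, Gamma_nat_eq_factorial, Stirling.log_stirlingSeq_formula,
    log_div hn0.ne' (exp_pos 1).ne', log_exp, show 2 * π * n = π * (2 * n) by ring,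
    log_mul pi_pos.ne' (by positivity)]
  ring

lemma tendsto_stirlingRem_natCast : Tendsto (fun n : ℕ => stirlingRem n) atTop (𝓝 0) := by
  have h := ((continuousAt_log (sqrt_pos.2 pi_pos).ne').tendsto.comp
    Stirling.tendsto_stirlingSeq_sqrt_pi).sub_const (log π / 2)
  rw [log_sqrt pi_pos.le, sub_self] at h
  exact h.congr' ((eventually_ne_atTop 0).mono fun n hn => (stirlingRem_natCast hn).symm)

lemma tendsto_mul_log_add_sub_log (t : ℝ) :
    Tendsto (fun y => y * (log (y + t) - log y)) atTop (𝓝 t) := by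
  refine (tendsto_mul_log_one_add_div_atTop t).congr' ?_
  filter_upwards [eventually_gt_atTop 0, eventually_gt_atTop (-t)] with y hy hyt
  rw [← log_div (by linarith) hy.ne', add_div, div_self hy.ne']

lemma tendsto_stirlingApprox_add_sub (t : ℝ) :
    Tendsto (fun y => stirlingApprox (y + t) - stirlingApprox y - t * log y) atTop (𝓝 0) := by
  have hD := tendsto_log_comp_add_sub_log t
  have h := ((tendsto_mul_log_add_sub_log t).add (hD.const_mul (t + 1 / 2))).sub_const t
  rw [mul_zero, add_zero, sub_self] at h
  refine h.congr' ?_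
  filter_upwards [eventually_gt_atTop 0, eventually_gt_atTop (-t)] with y hy hyt
  simp only [stirlingApprox]
  rw [log_mul (by positivity) (by linarith), log_mul (by positivity) hy.ne']
  ring

lemma log_Gamma_natCast_add_le {m : ℕ} {t : ℝ} (ht0 : 0 < t) (ht1 : t ≤ 1) :
    log (Gamma (m + 1 + t)) ≤ log (Gamma (m + 1)) + t * log (m + 1) := by
  have h := BohrMollerup.f_add_nat_le convexOn_log_Gamma (fun hy => log_Gamma_add_one hy)
    (n := m + 1) (Nat.succ_ne_zero m) ht0 ht1
  simpa using h

lemma le_log_Gamma_natCast_add {m : ℕ} (hm : m ≠ 0) {t : ℝ} (ht0 : 0 < t) :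
    log (Gamma (m + 1)) + t * log m ≤ log (Gamma (m + 1 + t)) := by
  have h := BohrMollerup.f_add_nat_ge convexOn_log_Gamma (fun hy => log_Gamma_add_one hy)
    (n := m + 1) (by omega) ht0
  simpa using h

lemma tendsto_stirlingRem_natCast_add {t : ℝ} (ht0 : 0 < t) (ht1 : t ≤ 1) :
    Tendsto (fun n : ℕ => stirlingRem (n + t)) atTop (𝓝 0) := by
  set e : ℕ → ℝ := fun n => stirlingApprox (n + t) - stirlingApprox n - t * log n
  have he : Tendsto e atTop (𝓝 0) :=
    (tendsto_stirlingApprox_add_sub t).comp tendsto_natCast_atTop_atTop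
  have hlow := tendsto_stirlingRem_natCast.sub he
  have hup := hlow.add (tendsto_log_nat_add_one_sub_log.const_mul t)
  rw [sub_zero] at hlow
  rw [sub_zero, mul_zero, add_zero] at hup
  refine tendsto_of_tendsto_of_tendsto_of_le_of_le' hlow hup ?_ ?_
  · filter_upwards [eventually_ne_atTop 0] with n hn
    have := le_log_Gamma_natCast_add hn ht0
    simp only [stirlingRem, e, add_right_comm _ t]
    linarith
  · filter_upwards with n
    have := log_Gamma_natCast_add_le (m := n) ht0 ht1
    simp only [stirlingRem, e, add_right_comm _ t]
    linarith

lemma exists_eq_add_natCast {x : ℝ} (hx : 0 < x) :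
    ∃ t ∈ Ioc (0 : ℝ) 1, ∃ k : ℕ, x = t + k := by
  have hk : 1 ≤ ⌈x⌉₊ := Nat.one_le_iff_ne_zero.2 (Nat.ceil_pos.2 hx).ne'
  refine ⟨x - (⌈x⌉₊ - 1 : ℕ), ⟨?_, ?_⟩, ⌈x⌉₊ - 1, by ring⟩ <;>
    push_cast [Nat.cast_sub hk] <;>
    linarith [Nat.le_ceil x, Nat.ceil_lt_add_one hx.le]

lemma tendsto_stirlingRem_add_natCast {x : ℝ} (hx : 0 < x) :
    Tendsto (fun n : ℕ => stirlingRem (x + n)) atTop (𝓝 0) := by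
  obtain ⟨t, ⟨ht0, ht1⟩, k, rfl⟩ := exists_eq_add_natCast hx
  refine ((tendsto_stirlingRem_natCast_add ht0 ht1).comp (tendsto_add_atTop_nat k)).congr ?_
  intro n
  simp only [Function.comp_apply]
  push_cast
  ring_nf

lemma stirlingRem_pos {x : ℝ} (hx : 0 < x) : 0 < stirlingRem x := by
  have hanti : StrictAnti fun n : ℕ => stirlingRem (x + n) :=
    strictAnti_nat_of_succ_lt fun n => by
      simpa [add_assoc] using stirlingRem_add_one_lt (by positivity : 0 < x + n)
  have h := hanti.antitone.le_of_tendsto (tendsto_stirlingRem_add_natCast hx) 1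
  have h01 := hanti zero_lt_one
  simp only [Nat.cast_zero, add_zero, Nat.cast_one] at h h01
  linarith

noncomputable def quad (x : ℝ) : ℝ := x ^ 2 + x / 3 + 1 / 18

lemma quad_pos (x : ℝ) : 0 < quad x := by
  unfold quad; nlinarith [sq_nonneg (x + 1 / 6)]

noncomputable def quadRem (y : ℝ) : ℝ :=
  log (Gamma (y + 1)) - (y * log y - y + log (2 * π) / 2 + log (quad y) / 4)

lemma quadRem_le_stirlingRem {y : ℝ} (hy : 0 < y) : quadRem y ≤ stirlingRem y := by
  have hsq : 2 * log y ≤ log (quad y) := by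
    rw [show 2 * log y = log (y ^ 2) by rw [log_pow]; norm_num]
    exact log_le_log (by positivity) (by unfold quad; nlinarith)
  have := log_mul (by positivity : 2 * π ≠ 0) hy.ne'
  simp only [quadRem, stirlingRem, stirlingApprox]
  linarith

noncomputable def quadStep (y : ℝ) : ℝ :=
  y * (log (y + 1) - log y) - 1 + (log (quad (y + 1)) - log (quad y)) / 4

lemma quadRem_sub_quadRem_add_one {y : ℝ} (hy : 0 < y) :
    quadRem y - quadRem (y + 1) = quadStep y := by
  simp only [quadRem, quadStep]
  rw [log_Gamma_add_one (by linarith : 0 < y + 1)]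
  ring

lemma hasDerivAt_log_quad (x : ℝ) :
    HasDerivAt (fun x => log (quad x)) ((2 * x + 1 / 3) / quad x) x := by
  have hq : HasDerivAt quad (2 * x + 1 / 3) x := by
    refine (((hasDerivAt_pow 2 x).add ((hasDerivAt_id x).div_const 3)).add_const
      (1 / 18)).congr_deriv ?_
    norm_num
  exact hq.log (quad_pos x).ne'

lemma hasDerivAt_quadStep {x : ℝ} (hx : 0 < x) :
    HasDerivAt quadStep ((log (x + 1) - log x) - 1 / (x + 1)
      + ((2 * x + 7 / 3) / quad (x + 1) - (2 * x + 1 / 3) / quad x) / 4) x := by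
  have hlog1 : HasDerivAt (fun x => log (x + 1)) (1 / (x + 1)) x := by
    simpa using ((hasDerivAt_id x).add_const 1).log (by simp; linarith)
  have hlog : HasDerivAt log (1 / x) x := by simpa using hasDerivAt_log hx.ne'
  have hq1 : HasDerivAt (fun x => log (quad (x + 1))) ((2 * x + 7 / 3) / quad (x + 1)) x := by
    refine ((hasDerivAt_log_quad (x + 1)).comp x ((hasDerivAt_id x).add_const 1)).congr_deriv ?_
    ring
  refine ((((hasDerivAt_id x).mul (hlog1.sub hlog)).sub_const 1).add
    ((hq1.sub (hasDerivAt_log_quad x)).div_const 4)).congr_deriv ?_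
  simp only [id, Pi.sub_apply]
  field_simp
  ring

lemma quadStep_deriv_pos {x : ℝ} (hx : 0 < x) :
    0 < (log (x + 1) - log x) - 1 / (x + 1)
      + ((2 * x + 7 / 3) / quad (x + 1) - (2 * x + 1 / 3) / quad x) / 4 := by
  set u := 1 / (2 * x + 1) with hu
  have hlog : 2 * (u + u ^ 3 / 3 + u ^ 5 / 5 + u ^ 7 / 7) ≤ log (x + 1) - log x := by
    refine le_of_eq_of_le ?_ (sum_le_log_add_one_sub_log hx 4)
    simp only [Finset.sum_range_succ, Finset.sum_range_zero]
    ring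
  have hrational : 8 * (u + u ^ 3 / 3 + u ^ 5 / 5 + u ^ 7 / 7) - 4 / (x + 1)
      + ((2 * x + 7 / 3) / quad (x + 1) - (2 * x + 1 / 3) / quad x)
      = (3340 + 35469 * x + 173660 * x ^ 2 + 463670 * x ^ 3 + 731664 * x ^ 4 + 678304 * x ^ 5
          + 334656 * x ^ 6 + 64512 * x ^ 7)
        / (8505 * quad x * quad (x + 1) * (x + 1) * (2 * x + 1) ^ 7) := by
    have := quad_pos x
    have := quad_pos (x + 1)
    rw [hu]
    unfold quad at *
    field_simp
    ring
  have hpos : 0 < (3340 + 35469 * x + 173660 * x ^ 2 + 463670 * x ^ 3 + 731664 * x ^ 4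
      + 678304 * x ^ 5 + 334656 * x ^ 6 + 64512 * x ^ 7)
        / (8505 * quad x * quad (x + 1) * (x + 1) * (2 * x + 1) ^ 7) := by
    have := quad_pos x
    have := quad_pos (x + 1)
    positivity
  linarith [show 4 / (x + 1) = 4 * (1 / (x + 1)) by ring]

lemma strictMonoOn_quadStep : StrictMonoOn quadStep (Ioi 0) := by
  refine strictMonoOn_of_deriv_pos (convex_Ioi 0)
    (fun x hx => (hasDerivAt_quadStep hx).continuousAt.continuousWithinAt) fun x hx => ?_
  rw [interior_Ioi] at hx
  rw [(hasDerivAt_quadStep hx).deriv]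
  exact quadStep_deriv_pos hx

lemma log_quad_add_one_sub_log_quad_le {y : ℝ} (hy : 0 < y) :
    log (quad (y + 1)) - log (quad y) ≤ 3 / y := by
  have hq := quad_pos y
  rw [← log_div (quad_pos _).ne' hq.ne']
  refine (log_le_sub_one_of_pos (div_pos (quad_pos _) hq)).trans ?_
  rw [div_sub_one hq.ne', div_le_div_iff₀ hq hy]
  unfold quad
  nlinarith [sq_nonneg (y - 1 / 6)]

lemma tendsto_log_quad_add_one_sub_log_quad :
    Tendsto (fun y => log (quad (y + 1)) - log (quad y)) atTop (𝓝 0) := by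
  refine tendsto_of_tendsto_of_tendsto_of_le_of_le' tendsto_const_nhds
    (tendsto_const_nhds (x := (3 : ℝ)) |>.div_atTop tendsto_id) ?_ ?_
  · filter_upwards [eventually_gt_atTop 0] with y hy
    refine sub_nonneg.2 (log_le_log (quad_pos y) ?_)
    unfold quad
    nlinarith
  · filter_upwards [eventually_gt_atTop 0] with y hy
    simpa using log_quad_add_one_sub_log_quad_le hy

lemma tendsto_quadStep_atTop : Tendsto quadStep atTop (𝓝 0) := by
  have h := ((tendsto_mul_log_add_sub_log 1).sub_const 1).add
    (tendsto_log_quad_add_one_sub_log_quad.div_const 4)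
  rw [sub_self, zero_div, add_zero] at h
  exact h

lemma quadStep_neg {x : ℝ} (hx : 0 < x) : quadStep x < 0 := by
  have hle : quadStep (x + 1) ≤ 0 :=
    ge_of_tendsto tendsto_quadStep_atTop <| (eventually_ge_atTop (x + 1)).mono fun y hy =>
      strictMonoOn_quadStep.monotoneOn (mem_Ioi.2 (by linarith)) (mem_Ioi.2 (by linarith)) hy
  linarith [strictMonoOn_quadStep (mem_Ioi.2 hx) (mem_Ioi.2 (by linarith)) (lt_add_one x)]

lemma quadRem_neg {x : ℝ} (hx : 0 < x) : quadRem x < 0 := by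
  have hmono : StrictMono fun n : ℕ => quadRem (x + n) :=
    strictMono_nat_of_lt_succ fun n => by
      have h := quadRem_sub_quadRem_add_one (by positivity : 0 < x + n)
      have := quadStep_neg (by positivity : 0 < x + n)
      rw [Nat.cast_succ, ← add_assoc]
      linarith
  have hle : quadRem (x + 1) ≤ 0 := by
    refine ge_of_tendsto (tendsto_stirlingRem_add_natCast hx) <|
      (eventually_ge_atTop 1).mono fun n hn => ?_
    have := quadRem_le_stirlingRem (by positivity : 0 < x + n)
    have := hmono.monotone hn
    simp only [Nat.cast_one] at this
    linarith
  have := hmono zero_lt_one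
  simp only [Nat.cast_zero, add_zero, Nat.cast_one] at this
  linarith

lemma log_mul_rpow_mul_exp_mul_quad_rpow {c x : ℝ} (hc : 0 < c) (hx : 0 < x) :
    log (c * x ^ x * exp (-x) * quad x ^ ((1 : ℝ) / 4))
      = log c + x * log x - x + log (quad x) / 4 := by
  have hq := quad_pos x
  rw [log_mul (by positivity) (by positivity), log_mul (by positivity) (by positivity),
    log_mul hc.ne' (by positivity), log_rpow hx, log_rpow hq, log_exp]
  ring

lemma lt_log_Gamma_add_one {x : ℝ} (hx : 0 < x) :
    x * log (x + 1) - x - 1 + log (2 * π) / 2 + log (x + 1) / 2 < log (Gamma (x + 1)) := by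
  have hx1 : 0 < x + 1 := by linarith
  have h := stirlingRem_pos hx1
  rw [stirlingRem, stirlingApprox, log_Gamma_add_one hx1, log_mul (by positivity) hx1.ne'] at h
  linarith

lemma log_eighteen_add_four_le : log 18 + 4 ≤ 4 * log (2 * π) := by
  have he : exp 1 ^ 4 ≤ 2.72 ^ 4 :=
    pow_le_pow_left₀ (exp_pos 1).le (exp_one_lt_d9.le.trans (by norm_num)) 4
  have hπ : (6.28 : ℝ) ^ 4 ≤ (2 * π) ^ 4 :=
    pow_le_pow_left₀ (by norm_num) (by linarith [pi_gt_d2]) 4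
  have hl : log 18 + 4 = log (18 * exp 1 ^ 4) := by
    rw [log_mul (by norm_num) (by positivity), log_pow, log_exp]; norm_num
  have hr : 4 * log (2 * π) = log ((2 * π) ^ 4) := by rw [log_pow]; norm_num
  rw [hl, hr]
  exact log_le_log (by positivity) (by linarith)

lemma lt_Gamma_add_one {x : ℝ} (hx : 0 < x) :
    (18 ^ ((1 : ℝ) / 4) / √(2 * π)) * x ^ x * exp (-x) * quad x ^ ((1 : ℝ) / 4)
      < Gamma (x + 1) := by
  have hq := quad_pos x
  rw [← log_lt_log_iff (by positivity) (Gamma_pos_of_pos (by linarith)),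
    log_mul_rpow_mul_exp_mul_quad_rpow (by positivity) hx,
    log_div (by positivity) (by positivity), log_rpow (by norm_num), log_sqrt (by positivity)]
  have hxlog : x * log x ≤ x * log (x + 1) :=
    mul_le_mul_of_nonneg_left (log_le_log hx (by linarith)) hx.le
  have hquad : log (quad x) ≤ 2 * log (x + 1) := by
    rw [show 2 * log (x + 1) = log ((x + 1) ^ 2) by rw [log_pow]; norm_num]
    exact log_le_log hq (by unfold quad; nlinarith)
  linarith [lt_log_Gamma_add_one hx, log_eighteen_add_four_le]

lemma Gamma_add_one_lt {x : ℝ} (hx : 0 < x) :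
    Gamma (x + 1) < √(2 * π) * x ^ x * exp (-x) * quad x ^ ((1 : ℝ) / 4) := by
  have hq := quad_pos x
  rw [← log_lt_log_iff (Gamma_pos_of_pos (by linarith)) (by positivity),
    log_mul_rpow_mul_exp_mul_quad_rpow (by positivity) hx, log_sqrt (by positivity)]
  have h := quadRem_neg hx
  rw [quadRem] at h
  linarith

end GammaQuarticBound

open GammaQuarticBound in
theorem stmt_14 (x : ℝ) (hx : 0 < x) :
    ((18:ℝ) ^ ((1:ℝ)/4) / Real.sqrt (2 * Real.pi)) * x ^ x * Real.exp (-x) *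
        (x^2 + x/3 + 1/18) ^ ((1:ℝ)/4) < Real.Gamma (x + 1) ∧
    Real.Gamma (x + 1) <
      Real.sqrt (2 * Real.pi) * x ^ x * Real.exp (-x) *
        (x^2 + x/3 + 1/18) ^ ((1:ℝ)/4) :=
  ⟨lt_Gamma_add_one hx, Gamma_add_one_lt hx⟩
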